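/- Let q be an even prime power, let ω be a primitive element of F_{q²}, let α = ω^{q−1} (a primitive (q+1)-st root of unity), and let k be even with 1 ≤ k ≤ q; write k = q − 2r. Let g_1(X) = ∏_{i=−r}^{r} (X − α^i), a polynomial with coefficients in F_q dividing X^{q+1} − 1. Then the k-dimensional cyclic code ⟨g_1⟩ of length q+1 over F_q is a generalised Reed–Solomon code (and is a [q+1, k, q+2−k]_q MDS code). -/

import Mathlib

/-!
Let `α` be a primitive `(q+1)`-st root of unity in `𝔽_{q²}` and attach to coordinate `i ≤ q` the
root of unity `β_i = α^(i+1)`, so that `β_q = 1`. On the roots of unity `β_i ≠ 1` the Cayley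
transform `y ↦ (ω - ω^q y) / (1 - y)` takes values fixed by `x ↦ x^q` (Frobenius inverts `β_i` and
swaps `ω` and `ω^q`), so it maps them bijectively onto `𝔽_q`; it sends `1` to infinity. With these
points and the weights `θ_i = (1 - β_i)^(k-1) β_i^(r+1)`, `θ_q = (ω - ω^q)^(k-1)`, which lie in
`𝔽_q` because `(-1)^(k-1) = 1` in characteristic 2, the `i`-th coordinate of the GRS codeword of
`f` is `β_i^(r+1) H(β_i)`, where `H` is the degree-`(k-1)` homogenisation of `f` evaluated at
`(ω - ω^q y, 1 - y)`. Evaluating the codeword polynomial at `α^m`, `|m| ≤ r`, therefore gives sums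
of `β^e` over all `(q+1)`-st roots of unity `β` with `1 ≤ e ≤ q`, which vanish. So the
`k`-dimensional GRS code lies in `⟨g₁⟩`, which is spanned by `k` vectors, and the two coincide.
-/

open Polynomial

/-- A generalised Reed–Solomon code of length `q+1` and dimension `k`, with symbols from the
field `F` of `q` elements, viewed inside the `F`-algebra `K` via `algebraMap`. -/
def IsGRSCode (q k : ℕ) (F K : Type*) [Field F] [CommRing K] [Algebra F K]
    (Code : Set (Fin (q + 1) → K)) : Prop :=
  ∃ (a : Fin q → F) (θ : Fin (q + 1) → F),
    Function.Bijective a ∧ (∀ i, θ i ≠ 0) ∧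
    Code = { w | ∃ f : Polynomial F, f.degree ≤ (k - 1 : ℕ) ∧
      w = fun i => algebraMap F K
        (θ i * (Fin.snoc (fun j : Fin q => f.eval (a j)) (f.coeff (k - 1)) : Fin (q + 1) → F) i) }

open scoped Finset

namespace IsPrimitiveRoot

variable {K : Type*} [Field K] {ζ : K} {N : ℕ}

theorem geom_sum_zpow_eq_zero (h : IsPrimitiveRoot ζ N) {E : ℤ} (hE : ¬ (N : ℤ) ∣ E) :
    ∑ j ∈ Finset.range N, (ζ ^ E) ^ j = 0 := by
  have hE1 : ζ ^ E ≠ 1 := fun h1 => hE ((h.zpow_eq_one_iff_dvd E).mp h1)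
  have hEN : (ζ ^ E) ^ N = 1 := by
    rw [← zpow_natCast, ← zpow_mul, mul_comm, zpow_mul, zpow_natCast, h.pow_eq_one, one_zpow]
  rw [geom_sum_eq hE1, hEN, sub_self, zero_div]

theorem sum_zpow_mul_eval_eq_zero (h : IsPrimitiveRoot ζ N) {P : K[X]} {s : ℤ}
    (hs : ∀ e ≤ P.natDegree, ¬ (N : ℤ) ∣ s + e) :
    ∑ j ∈ Finset.range N, (ζ ^ (j + 1)) ^ s * P.eval (ζ ^ (j + 1)) = 0 := by
  rcases Nat.eq_zero_or_pos N with rfl | hN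
  · simp
  have hζ : ζ ≠ 0 := h.ne_zero hN.ne'
  have hterm : ∀ j e : ℕ, (ζ ^ (j + 1)) ^ s * (P.coeff e * (ζ ^ (j + 1)) ^ e)
      = P.coeff e * ζ ^ (s + e) * (ζ ^ (s + e)) ^ j := by
    intro j e
    simp only [← zpow_natCast, ← zpow_mul, ← zpow_add₀ hζ, mul_assoc, mul_left_comm _ (P.coeff e)]
    congr 2
    push_cast
    ring
  simp_rw [eval_eq_sum_range, Finset.mul_sum, hterm]
  rw [Finset.sum_comm]
  refine Finset.sum_eq_zero fun e he => ?_
  rw [← Finset.mul_sum,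
    h.geom_sum_zpow_eq_zero (hs e (Nat.lt_succ_iff.mp (Finset.mem_range.mp he))), mul_zero]

theorem zpow_injOn_Icc (h : IsPrimitiveRoot ζ N) {a b : ℤ} (hab : b - a < N) :
    Set.InjOn (ζ ^ ·) (Set.Icc a b) := by
  intro i hi j hj hij
  have hN : N ≠ 0 := by have := hi.1.trans hi.2; omega
  have hζ := h.ne_zero hN
  have hdvd : (N : ℤ) ∣ i - j := (h.zpow_eq_one_iff_dvd _).mp <| by
    rw [zpow_sub₀ hζ, div_eq_one_iff_eq (zpow_ne_zero _ hζ)]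
    exact hij
  have := Int.eq_zero_of_abs_lt_dvd hdvd
    (abs_sub_lt_iff.mpr ⟨by linarith [hi.2, hj.1], by linarith [hi.1, hj.2]⟩)
  omega

theorem pow_ne_self {n : ℕ} (h : IsPrimitiveRoot ζ N) (hn : 1 < n) (hnN : n ≤ N) : ζ ^ n ≠ ζ := by
  intro hζ
  refine h.pow_ne_one_of_pos_of_lt (l := n - 1) (by omega) (by omega) ?_
  refine mul_right_cancel₀ (h.ne_zero (by omega)) ?_
  rw [← pow_succ, Nat.sub_add_cancel hn.le, hζ, one_mul]

theorem pow_pred_of_sq_sub_one {q : ℕ} (h : IsPrimitiveRoot ζ (q ^ 2 - 1)) (hq : 2 ≤ q) :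
    IsPrimitiveRoot (ζ ^ (q - 1)) (q + 1) := by
  have hfac : q ^ 2 - 1 = (q + 1) * (q - 1) := by simpa using Nat.sq_sub_sq q 1
  simpa [hfac, Nat.mul_div_cancel _ (show 0 < q - 1 by omega)] using
    h.pow_of_dvd (show q - 1 ≠ 0 by omega) (hfac ▸ dvd_mul_left _ _)

end IsPrimitiveRoot

theorem MvPolynomial.IsHomogeneous.natDegree_aeval_le {σ R : Type*} [CommSemiring R]
    {P : MvPolynomial σ R} {n : ℕ} (hP : P.IsHomogeneous n) (g : σ → R[X])
    (hg : ∀ i, (g i).natDegree ≤ 1) : (MvPolynomial.aeval g P).natDegree ≤ n := by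
  rw [MvPolynomial.aeval_def, MvPolynomial.eval₂_eq]
  refine natDegree_sum_le_of_forall_le _ _ fun m hm => ?_
  refine (natDegree_C_mul_le _ _).trans ?_
  calc (∏ i ∈ m.support, g i ^ m i).natDegree ≤ ∑ i ∈ m.support, (g i ^ m i).natDegree :=
        natDegree_prod_le _ _
    _ ≤ ∑ i ∈ m.support, m i :=
        Finset.sum_le_sum fun i _ => (natDegree_pow_le_of_le _ (hg i)).trans_eq (mul_one _)
    _ = n := by
        simpa [Finsupp.weight_apply, Finsupp.sum] using hP (MvPolynomial.mem_support_iff.mp hm)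

theorem MvPolynomial.polynomial_eval_aeval {σ R : Type*} [CommSemiring R] (P : MvPolynomial σ R)
    (g : σ → R[X]) (y : R) :
    (MvPolynomial.aeval g P).eval y = MvPolynomial.eval (fun i => (g i).eval y) P := by
  induction P using MvPolynomial.induction_on <;> simp_all

namespace Polynomial

theorem eval_homogenize_of_eq_zero {R : Type*} [CommSemiring R] (p : R[X]) (n : ℕ)
    (x : Fin 2 → R) (hx : x 1 = 0) :
    MvPolynomial.eval x (p.homogenize n) = p.coeff n * x 0 ^ n := by
  have hmon : ∀ a b : ℕ, MvPolynomial.eval x (.monomial (fun₀ | 0 => a | 1 => b) (p.coeff a))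
      = p.coeff a * x 0 ^ a * x 1 ^ b := by
    intro a b
    rw [MvPolynomial.eval_monomial, Finsupp.update_eq_add_single (by simp),
      Finsupp.prod_add_index', Finsupp.prod_single_index, Finsupp.prod_single_index, mul_assoc]
      <;> simp [pow_add]
  rw [homogenize, MvPolynomial.eval_sum, Finset.sum_eq_single (n, 0)]
  · simp [hmon]
  · rintro ⟨a, b⟩ hab hne
    have hb : b ≠ 0 := by rintro rfl; simp_all
    simp [hmon, hx, hb]
  · simp

theorem prod_X_sub_C_dvd_of_eval_eq_zero {ι K : Type*} [Field K] {s : Finset ι} {x : ι → K}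
    (hx : Set.InjOn x s) {P : K[X]} (hP : ∀ i ∈ s, P.eval (x i) = 0) :
    ∏ i ∈ s, (X - C (x i)) ∣ P :=
  Finset.prod_dvd_of_coprime
    (fun _ hi _ hj hij =>
      isCoprime_X_sub_C_of_isUnit_sub (sub_ne_zero.mpr (hx.ne hi hj hij)).isUnit)
    fun i hi => dvd_iff_isRoot.mpr (hP i hi)

theorem exists_monic_map_eq_of_coeff {R S : Type*} [Semiring R] [Semiring S] {f : R →+* S}
    (hf : Function.Injective f) {g : S[X]} (hg : g.Monic) {c : ℕ → R}
    (hc : ∀ j, f (c j) = g.coeff j) :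
    ∃ g₀ : R[X], g₀.Monic ∧ g₀.map f = g ∧ ∀ j, g₀.coeff j = c j := by
  obtain ⟨g₀, hmap, -, hmonic⟩ :=
    lifts_and_natDegree_eq_and_monic ((lifts_iff_coeff_lifts g).mpr fun j => ⟨c j, hc j⟩) hg
  exact ⟨g₀, hmonic, hmap, fun j => hf (by rw [← coeff_map, hmap, hc])⟩

theorem eval_map_ofFn {R S : Type*} [CommSemiring R] [DecidableEq R] [CommSemiring S]
    (φ : R →+* S) {n : ℕ} (w : Fin n → R) (x : S) :
    ((ofFn n w).map φ).eval x = ∑ i : Fin n, φ (w i) * x ^ (i : ℕ) := by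
  simp [ofFn_eq_sum_monomial, Polynomial.map_sum, eval_finsetSum]

theorem range_toFn_X_pow_mul {R : Type*} [Semiring R] {n k : ℕ} (g : R[X]) :
    Set.range (fun t : Fin k => toFn n (X ^ (t : ℕ) * g)) = {v | ∃ t : Fin k,
      v = fun i : Fin n => if (t : ℕ) ≤ (i : ℕ) then g.coeff ((i : ℕ) - (t : ℕ)) else 0} := by
  ext v
  refine exists_congr fun t => ?_
  rw [eq_comm]
  congr! 1
  funext i
  simp [toFn, coeff_X_pow_mul']

theorem toFn_mul_mem_span {R : Type*} [CommSemiring R] {n k : ℕ} (g : R[X]) {m : R[X]}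
    (hm : m.natDegree < k) :
    toFn n (m * g) ∈ Submodule.span R (Set.range fun t : Fin k => toFn n (X ^ (t : ℕ) * g)) := by
  rw [Submodule.mem_span_range_iff_exists_fun]
  refine ⟨fun t => m.coeff t, ?_⟩
  conv_rhs => rw [m.as_sum_range_C_mul_X_pow' hm]
  simp [Finset.sum_mul, Fin.sum_univ_eq_sum_range (fun t => m.coeff t • toFn n (X ^ t * g)),
    ← smul_eq_C_mul]

theorem mem_span_toFn_of_dvd_ofFn {R : Type*} [CommRing R] [IsDomain R] [DecidableEq R]
    {g : R[X]} (hg : g.Monic) {n k : ℕ} (hgk : g.natDegree + k = n) {w : Fin n → R}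
    (hdvd : g ∣ ofFn n w) :
    w ∈ Submodule.span R (Set.range fun t : Fin k => toFn n (X ^ (t : ℕ) * g)) := by
  obtain ⟨m, hm⟩ := hdvd
  rcases eq_or_ne m 0 with rfl | hm0
  · rw [mul_zero, ← ofFn_zero n] at hm
    rw [injective_ofFn n hm]
    exact Submodule.zero_mem _
  rw [← toFn_comp_ofFn_eq_id n w, hm, mul_comm]
  refine toFn_mul_mem_span g ?_
  have hn : n ≠ 0 := ne_zero_of_ofFn_ne_zero (hm ▸ mul_ne_zero hg.ne_zero hm0)
  have := ofFn_natDegree_lt (Nat.one_le_iff_ne_zero.mpr hn) w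
  rw [hm, natDegree_mul hg.ne_zero hm0] at this
  omega

end Polynomial

theorem Submodule.eq_span_range_of_le_of_finrank_eq {K M : Type*} [Field K] [AddCommGroup M]
    [Module K M] {k : ℕ} {v : Fin k → M} {V : Submodule K M}
    (hle : V ≤ Submodule.span K (Set.range v)) (hV : Module.finrank K V = k) :
    V = Submodule.span K (Set.range v) := by
  have := FiniteDimensional.span_of_finite K (Set.finite_range v)
  refine Submodule.eq_of_le_of_finrank_le hle ?_
  rw [hV]
  exact (finrank_range_le_card v).trans_eq (Fintype.card_fin k)

theorem hammingNorm_eq_card_castSucc_add {β : Type*} [Zero β] [DecidableEq β] {n : ℕ}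
    (w : Fin (n + 1) → β) :
    hammingNorm w = #{j : Fin n | w j.castSucc ≠ 0} + if w (Fin.last n) ≠ 0 then 1 else 0 := by
  simp only [hammingNorm, Finset.card_filter, Fin.sum_univ_castSucc]

namespace FiniteField

variable {F K : Type*} [Field F] [Fintype F]

theorem pow_card_eq_self_iff_mem_range [Field K] [Algebra F K] {x : K} :
    x ^ Fintype.card F = x ↔ x ∈ Set.range (algebraMap F K) := by
  refine ⟨fun hx => ?_, by rintro ⟨y, rfl⟩; rw [← map_pow, pow_card]⟩
  set p : F[X] := X ^ Fintype.card F - X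
  have hroots : p.roots.map (algebraMap F K) = (p.map (algebraMap F K)).roots := by
    refine roots_map_of_injective_of_card_eq_natDegree (algebraMap F K).injective ?_
    rw [roots_X_pow_card_sub_X, X_pow_card_sub_X_natDegree_eq F Fintype.one_lt_card]
    rfl
  have hx' : x ∈ (p.map (algebraMap F K)).roots := by
    have hp : p.map (algebraMap F K) = X ^ Fintype.card F - X := by simp [p]
    rw [hp, mem_roots (X_pow_card_sub_X_ne_zero K Fintype.one_lt_card)]
    simp [hx]
  rw [← hroots, roots_X_pow_card_sub_X] at hx'
  obtain ⟨y, -, rfl⟩ := Multiset.mem_map.mp hx'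
  exact ⟨y, rfl⟩

theorem sub_pow_card [CommRing K] [Algebra F K] (x y : K) :
    (x - y) ^ Fintype.card F = x ^ Fintype.card F - y ^ Fintype.card F := by
  simpa using map_sub (frobeniusAlgHom F K) x y

theorem neg_one_eq_one_of_even_card [Ring K] [Algebra F K] (h : Even (Fintype.card F)) :
    (-1 : K) = 1 := by
  have : CharP F 2 := ringChar.eq_iff.mp (even_card_iff_char_two.mpr (Nat.even_iff.mp h))
  simpa using congrArg (algebraMap F K) (CharTwo.neg_eq (1 : F))

end FiniteField

section GRS

variable {F : Type*} [Field F] {q : ℕ}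

def grsEncode (a : Fin q → F) (θ : Fin (q + 1) → F) (k : ℕ) : F[X] →ₗ[F] Fin (q + 1) → F where
  toFun f i := θ i * (Fin.snoc (fun j => f.eval (a j)) (f.coeff (k - 1)) : Fin (q + 1) → F) i
  map_add' f g := by
    funext i
    refine Fin.lastCases ?_ (fun j => ?_) i <;> simp [mul_add]
  map_smul' c f := by
    funext i
    refine Fin.lastCases ?_ (fun j => ?_) i <;> simp [mul_left_comm]

variable (a : Fin q → F) (θ : Fin (q + 1) → F) (k : ℕ) (f : F[X])

@[simp]
theorem grsEncode_castSucc (j : Fin q) :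
    grsEncode a θ k f j.castSucc = θ j.castSucc * f.eval (a j) := by
  simp [grsEncode]

@[simp]
theorem grsEncode_last : grsEncode a θ k f (Fin.last q) = θ (Fin.last q) * f.coeff (k - 1) := by
  simp [grsEncode]

variable {a θ k}

theorem isGRSCode_map_grsEncode (ha : Function.Bijective a) (hθ : ∀ i, θ i ≠ 0) (hk : 1 ≤ k) :
    IsGRSCode q k F F ((degreeLT F k).map (grsEncode a θ k) : Set (Fin (q + 1) → F)) := by
  refine ⟨a, θ, ha, hθ, ?_⟩
  obtain ⟨n, rfl⟩ : ∃ n, k = n + 1 := ⟨k - 1, by omega⟩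
  ext w
  simp [degreeLT_succ_eq_degreeLE, mem_degreeLE, grsEncode, eq_comm]

theorem finrank_map_grsEncode (ha : Function.Injective a) (hθ : ∀ i, θ i ≠ 0) (hk : k ≤ q) :
    Module.finrank F ((degreeLT F k).map (grsEncode a θ k)) = k := by
  have hinj : Function.Injective ((grsEncode a θ k).domRestrict (degreeLT F k)) := by
    rw [← LinearMap.ker_eq_bot, LinearMap.ker_eq_bot']
    rintro ⟨f, hf⟩ hzero
    have hroot : ∀ j, f.eval (a j) = 0 := fun j => by
      simpa [hθ] using congrFun hzero j.castSucc
    rw [Submodule.mk_eq_zero]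
    by_contra hf0
    have hdeg : f.natDegree < k := (natDegree_lt_iff_degree_lt hf0).mpr (mem_degreeLT.mp hf)
    exact hf0 (eq_zero_of_natDegree_lt_card_of_eval_eq_zero f ha hroot
      (by simpa using hdeg.trans_le hk))
  rw [← LinearMap.range_domRestrict, LinearMap.finrank_range_of_inj hinj,
    (degreeLTEquiv F k).finrank_eq, Module.finrank_fin_fun]

theorem card_eval_eq_zero_le_natDegree [DecidableEq F] (ha : Function.Injective a) {f : F[X]}
    (hf0 : f ≠ 0) : #{j | f.eval (a j) = 0} ≤ f.natDegree := by
  rw [← Finset.card_map ⟨a, ha⟩]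
  refine card_le_degree_of_subset_roots fun x hx => ?_
  obtain ⟨j, hj, rfl⟩ := Finset.mem_map.mp (Finset.mem_val.mp hx)
  exact (mem_roots hf0).mpr (Finset.mem_filter.mp hj).2

theorem le_hammingNorm_grsEncode [DecidableEq F] (ha : Function.Injective a) (hθ : ∀ i, θ i ≠ 0)
    (hf : f ∈ degreeLT F k) (hf0 : f ≠ 0) : q + 2 - k ≤ hammingNorm (grsEncode a θ k f) := by
  have hdeg : f.natDegree < k := (natDegree_lt_iff_degree_lt hf0).mpr (mem_degreeLT.mp hf)
  have hzeros := card_eval_eq_zero_le_natDegree ha hf0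
  have hsplit : #{j | f.eval (a j) = 0} + #{j | ¬f.eval (a j) = 0} = q := by
    rw [Finset.card_filter_add_card_filter_not, Finset.card_univ, Fintype.card_fin]
  rw [hammingNorm_eq_card_castSucc_add]
  simp only [grsEncode_castSucc, grsEncode_last, ne_eq, mul_eq_zero, hθ, false_or]
  split_ifs with hc
  · have : f.natDegree ≠ k - 1 := fun h => leadingCoeff_ne_zero.mpr hf0 (by rwa [leadingCoeff, h])
    omega
  · omega

end GRS

theorem one_sub_pow_mul_pow_pow_eq_self {R : Type*} [CommRing R] {y : R} {n k r : ℕ}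
    (hn : k + 2 * r = n) (hk : 1 ≤ k) (hy : y ^ (n + 1) = 1) (hfrob : (1 - y) ^ n = 1 - y ^ n)
    (hsign : (-1 : R) ^ (k - 1) = 1) :
    ((1 - y) ^ (k - 1) * y ^ (r + 1)) ^ n = (1 - y) ^ (k - 1) * y ^ (r + 1) := by
  obtain ⟨k, rfl⟩ : ∃ k', k = k' + 1 := ⟨k - 1, by omega⟩
  subst hn
  simp only [Nat.add_sub_cancel] at hsign ⊢
  have hshift : (1 - y) ^ (k + 1 + 2 * r) * y = -(1 - y) := by
    rw [hfrob]; linear_combination -hy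
  generalize 1 - y = t at hshift ⊢
  calc (t ^ k * y ^ (r + 1)) ^ (k + 1 + 2 * r)
      = (t ^ k * y ^ (r + 1)) ^ (k + 1 + 2 * r) * y ^ (k + 1 + 2 * r + 1) := by
        rw [hy, mul_one]
    _ = (t ^ (k + 1 + 2 * r) * y) ^ k * (y ^ (k + 1 + 2 * r + 1)) ^ (r + 1) * y ^ (r + 1) := by
        ring
    _ = t ^ k * y ^ (r + 1) := by
        rw [hshift, hy, one_pow, mul_one, neg_pow, hsign, one_mul]

section CayleyTransform

variable {F K : Type*} [Field F] [Fintype F] [Field K] [Algebra F K] {ω ζ : K}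

theorem cayley_pow_card {y : K} (hω : ω ^ Fintype.card F ^ 2 = ω)
    (hy : y ^ (Fintype.card F + 1) = 1) (hy1 : y ≠ 1) :
    ((ω - ω ^ Fintype.card F * y) / (1 - y)) ^ Fintype.card F
      = (ω - ω ^ Fintype.card F * y) / (1 - y) := by
  set q := Fintype.card F
  have hy0 : y ≠ 0 := by rintro rfl; simp at hy
  have hyq : y ^ q = y⁻¹ := eq_inv_of_mul_eq_one_left (by rw [← pow_succ, hy])
  have hωq : (ω ^ q) ^ q = ω := by rw [← pow_mul, ← sq, hω]
  have h1y : 1 - y ≠ 0 := sub_ne_zero.mpr (Ne.symm hy1)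
  have h1y' : 1 - y⁻¹ ≠ 0 := sub_ne_zero.mpr (Ne.symm (inv_ne_one.mpr hy1))
  rw [div_pow, FiniteField.sub_pow_card, FiniteField.sub_pow_card, mul_pow, hωq, hyq, one_pow,
    div_eq_div_iff h1y' h1y]
  field_simp
  ring

theorem exists_bijective_cayley (hω : ω ^ Fintype.card F ^ 2 = ω) (hωq : ω ^ Fintype.card F ≠ ω)
    (hζ : IsPrimitiveRoot ζ (Fintype.card F + 1)) :
    ∃ a : Fin (Fintype.card F) → F, Function.Bijective a ∧ ∀ j : Fin (Fintype.card F),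
      algebraMap F K (a j) * (1 - ζ ^ (j + 1 : ℕ)) = ω - ω ^ Fintype.card F * ζ ^ (j + 1 : ℕ) := by
  set q := Fintype.card F
  have hζ1 : ∀ j : Fin q, ζ ^ (j + 1 : ℕ) ≠ 1 := fun j =>
    hζ.pow_ne_one_of_pos_of_lt (Nat.succ_ne_zero _) (Nat.succ_lt_succ j.isLt)
  have hζq : ∀ j : Fin q, (ζ ^ (j + 1 : ℕ)) ^ (q + 1) = 1 := fun j => by
    rw [← pow_mul, mul_comm, pow_mul, hζ.pow_eq_one, one_pow]
  choose a ha using fun j : Fin q => FiniteField.pow_card_eq_self_iff_mem_range.mp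
    (cayley_pow_card hω (hζq j) (hζ1 j))
  have hcayley : ∀ j, algebraMap F K (a j) * (1 - ζ ^ (j + 1 : ℕ)) = ω - ω ^ q * ζ ^ (j + 1 : ℕ) :=
    fun j => by rw [ha j, div_mul_cancel₀ _ (sub_ne_zero.mpr (hζ1 j).symm)]
  refine ⟨a, (Fintype.bijective_iff_injective_and_card a).mpr ⟨fun j j' hjj' => ?_, by simp [q]⟩,
    hcayley⟩
  -- the Cayley transform is inverted by `A ↦ (ω - A) / (ω ^ q - A)`
  set A := algebraMap F K (a j)
  have hAω : ω ^ q - A ≠ 0 := by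
    rw [sub_ne_zero]
    intro h
    apply hωq
    have hAq : A ^ q = A := by rw [← map_pow]; exact congrArg _ (FiniteField.pow_card (a j))
    calc ω ^ q = (ω ^ q) ^ q := by rw [h, hAq]
      _ = ω := by rw [← pow_mul, ← sq, hω]
  have hinv : ∀ i, algebraMap F K (a i) = A → ζ ^ (i + 1 : ℕ) = (ω - A) / (ω ^ q - A) := by
    intro i hi
    rw [eq_div_iff hAω, ← hi]
    linear_combination hcayley i
  have := hζ.pow_inj (Nat.succ_lt_succ j.isLt) (Nat.succ_lt_succ j'.isLt)
    ((hinv j rfl).trans (hinv j' (by rw [← hjj'])).symm)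
  exact Fin.ext (Nat.succ_injective this)

theorem exists_grs_weights {k r : ℕ} (hkr : k + 2 * r = Fintype.card F) (hk : 1 ≤ k)
    (hsign : (-1 : K) ^ (k - 1) = 1) (hω : ω ^ Fintype.card F ^ 2 = ω)
    (hωq : ω ^ Fintype.card F ≠ ω) (hζ : IsPrimitiveRoot ζ (Fintype.card F + 1)) :
    ∃ θ : Fin (Fintype.card F + 1) → F, (∀ i, θ i ≠ 0) ∧
      (∀ j : Fin (Fintype.card F), algebraMap F K (θ j.castSucc)
        = (1 - ζ ^ (j + 1 : ℕ)) ^ (k - 1) * (ζ ^ (j + 1 : ℕ)) ^ (r + 1)) ∧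
      algebraMap F K (θ (Fin.last _)) = (ω - ω ^ Fintype.card F) ^ (k - 1) := by
  set q := Fintype.card F
  set θK : Fin (q + 1) → K := Fin.snoc
    (fun j : Fin q => (1 - ζ ^ (j + 1 : ℕ)) ^ (k - 1) * (ζ ^ (j + 1 : ℕ)) ^ (r + 1))
    ((ω - ω ^ q) ^ (k - 1))
  have hθK : ∀ i, θK i ^ q = θK i ∧ θK i ≠ 0 := by
    intro i
    induction i using Fin.lastCases with
    | last =>
      have hδ : (ω - ω ^ q) ^ q = -1 * (ω - ω ^ q) := by
        rw [FiniteField.sub_pow_card, ← pow_mul, ← sq, hω]; ring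
      simp only [θK, Fin.snoc_last]
      refine ⟨by rw [← pow_mul, mul_comm, pow_mul, hδ, mul_pow, hsign, one_mul], ?_⟩
      exact pow_ne_zero _ (sub_ne_zero.mpr hωq.symm)
    | cast j =>
      have hζ1 : ζ ^ (j + 1 : ℕ) ≠ 1 :=
        hζ.pow_ne_one_of_pos_of_lt (Nat.succ_ne_zero _) (Nat.succ_lt_succ j.isLt)
      simp only [θK, Fin.snoc_castSucc]
      refine ⟨one_sub_pow_mul_pow_pow_eq_self hkr hk ?_ ?_ hsign, ?_⟩
      · rw [← pow_mul, mul_comm, pow_mul, hζ.pow_eq_one, one_pow]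
      · rw [FiniteField.sub_pow_card, one_pow]
      · exact mul_ne_zero (pow_ne_zero _ (sub_ne_zero.mpr hζ1.symm))
          (pow_ne_zero _ (pow_ne_zero _ (hζ.ne_zero (Nat.succ_ne_zero _))))
  choose θ hθ using fun i => FiniteField.pow_card_eq_self_iff_mem_range.mp (hθK i).1
  refine ⟨θ, fun i h => (hθK i).2 (by rw [← hθ i, h, map_zero]), fun j => ?_, ?_⟩
  · rw [hθ]; simp [θK]
  · rw [hθ]; simp [θK]

end CayleyTransform

section GRSInCyclic

variable {F K : Type*} [Field F] [Field K] [Algebra F K]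

theorem IsPrimitiveRoot.eval_map_ofFn_eq_zero [DecidableEq F] {N : ℕ} {ζ : K}
    (hζ : IsPrimitiveRoot ζ N) {w : Fin N → F} {P : K[X]} {s : ℕ}
    (hw : ∀ i : Fin N, algebraMap F K (w i) = (ζ ^ (i + 1 : ℕ)) ^ s * P.eval (ζ ^ (i + 1 : ℕ)))
    {m : ℤ} (hm : ∀ e ≤ P.natDegree, ¬ (N : ℤ) ∣ s + m + e) :
    ((ofFn N w).map (algebraMap F K)).eval (ζ ^ m) = 0 := by
  rcases Nat.eq_zero_or_pos N with rfl | hN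
  · simp
  have hζ0 : ζ ≠ 0 := hζ.ne_zero hN.ne'
  have hshift : ∀ i : ℕ, (ζ ^ (i + 1)) ^ s * (ζ ^ m) ^ i
      = ζ ^ (-m) * (ζ ^ (i + 1)) ^ ((s : ℤ) + m) := by
    intro i
    simp only [← zpow_natCast, ← zpow_mul, ← zpow_add₀ hζ0]
    congr 1
    push_cast
    ring
  calc ((ofFn N w).map (algebraMap F K)).eval (ζ ^ m)
      = ζ ^ (-m) * ∑ j ∈ Finset.range N,
          (ζ ^ (j + 1)) ^ ((s : ℤ) + m) * P.eval (ζ ^ (j + 1)) := by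
        rw [eval_map_ofFn, Finset.mul_sum, ← Fin.sum_univ_eq_sum_range
          (fun j => ζ ^ (-m) * ((ζ ^ (j + 1)) ^ ((s : ℤ) + m) * P.eval (ζ ^ (j + 1))))]
        refine Finset.sum_congr rfl fun i _ => ?_
        rw [hw, ← mul_assoc, ← hshift]
        ring
    _ = 0 := by rw [hζ.sum_zpow_mul_eval_eq_zero hm, mul_zero]

variable {q : ℕ} {ω ζ : K} {a : Fin q → F} {θ : Fin (q + 1) → F} {k r : ℕ}

/-- Coordinate `i` of the code sits at the root of unity `ζ^(i+1)`; the last one, the point at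
infinity of the GRS code, sits at `ζ^(q+1) = 1`, the pole of the Cayley transform. -/
theorem algebraMap_grsEncode_eq (hζ : IsPrimitiveRoot ζ (q + 1))
    (ha : ∀ j : Fin q, algebraMap F K (a j) * (1 - ζ ^ (j + 1 : ℕ)) = ω - ω ^ q * ζ ^ (j + 1 : ℕ))
    (hθ : ∀ j : Fin q, algebraMap F K (θ j.castSucc)
      = (1 - ζ ^ (j + 1 : ℕ)) ^ (k - 1) * (ζ ^ (j + 1 : ℕ)) ^ (r + 1))
    (hθlast : algebraMap F K (θ (Fin.last q)) = (ω - ω ^ q) ^ (k - 1))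
    {f : F[X]} (hf : f.natDegree ≤ k - 1) (i : Fin (q + 1)) :
    algebraMap F K (grsEncode a θ k f i) = (ζ ^ (i + 1 : ℕ)) ^ (r + 1) *
      MvPolynomial.eval ![ω - ω ^ q * ζ ^ (i + 1 : ℕ), 1 - ζ ^ (i + 1 : ℕ)]
        ((f.map (algebraMap F K)).homogenize (k - 1)) := by
  have hfK : (f.map (algebraMap F K)).natDegree ≤ k - 1 := natDegree_map_le.trans hf
  induction i using Fin.lastCases with
  | last =>
    rw [grsEncode_last, Fin.val_last, hζ.pow_eq_one, one_pow, one_mul,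
      eval_homogenize_of_eq_zero _ _ _ (by simp)]
    simp [hθlast, mul_comm]
  | cast j =>
    have hζ1 : 1 - ζ ^ (j + 1 : ℕ) ≠ 0 := sub_ne_zero.mpr
      (hζ.pow_ne_one_of_pos_of_lt (Nat.succ_ne_zero _) (Nat.succ_lt_succ j.isLt)).symm
    rw [grsEncode_castSucc, map_mul, hθ, eval_homogenize hfK _ (by simpa using hζ1)]
    simp only [Matrix.cons_val_zero, Matrix.cons_val_one, Fin.val_castSucc, eval_map,
      ← (eq_div_iff hζ1).mpr (ha j), eval₂_at_apply]
    ring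

theorem prod_X_sub_C_zpow_dvd_ofFn_grsEncode [DecidableEq F] (hζ : IsPrimitiveRoot ζ (q + 1))
    (hkr : k + 2 * r = q) (hk : 1 ≤ k)
    (ha : ∀ j : Fin q, algebraMap F K (a j) * (1 - ζ ^ (j + 1 : ℕ)) = ω - ω ^ q * ζ ^ (j + 1 : ℕ))
    (hθ : ∀ j : Fin q, algebraMap F K (θ j.castSucc)
      = (1 - ζ ^ (j + 1 : ℕ)) ^ (k - 1) * (ζ ^ (j + 1 : ℕ)) ^ (r + 1))
    (hθlast : algebraMap F K (θ (Fin.last q)) = (ω - ω ^ q) ^ (k - 1))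
    {f : F[X]} (hf : f ∈ degreeLT F k) :
    ∏ m ∈ Finset.Icc (-(r : ℤ)) r, (X - C (ζ ^ m))
      ∣ (ofFn (q + 1) (grsEncode a θ k f)).map (algebraMap F K) := by
  set H : K[X] := MvPolynomial.aeval ![C ω - C (ω ^ q) * X, 1 - X]
    ((f.map (algebraMap F K)).homogenize (k - 1))
  have hHdeg : H.natDegree ≤ k - 1 :=
    (isHomogeneous_homogenize _).natDegree_aeval_le _ fun i => by
      fin_cases i <;> simp <;> compute_degree!
  have hfdeg : f.natDegree ≤ k - 1 := by
    obtain ⟨n, rfl⟩ : ∃ n, k = n + 1 := ⟨k - 1, by omega⟩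
    rw [degreeLT_succ_eq_degreeLE, mem_degreeLE] at hf
    exact natDegree_le_of_degree_le hf
  have hw : ∀ i : Fin (q + 1), algebraMap F K (grsEncode a θ k f i)
      = (ζ ^ (i + 1 : ℕ)) ^ (r + 1) * H.eval (ζ ^ (i + 1 : ℕ)) := fun i => by
    rw [algebraMap_grsEncode_eq hζ ha hθ hθlast hfdeg, MvPolynomial.polynomial_eval_aeval]
    congr 1
    refine congrArg (MvPolynomial.eval · _) (funext fun j => ?_)
    fin_cases j <;> simp
  have hinj : Set.InjOn (ζ ^ · : ℤ → K) (Finset.Icc (-(r : ℤ)) r) := by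
    rw [Finset.coe_Icc]
    exact hζ.zpow_injOn_Icc (by push_cast; omega)
  refine prod_X_sub_C_dvd_of_eval_eq_zero hinj fun m hm =>
    hζ.eval_map_ofFn_eq_zero hw fun e he hdvd => ?_
  rw [Finset.mem_Icc] at hm
  refine absurd (Int.eq_zero_of_dvd_of_nonneg_of_lt ?_ ?_ hdvd) ?_ <;> push_cast <;> omega

end GRSInCyclic

theorem grassl_roetteler_cyclic_even_even_is_GRS_general
    (q k r : ℕ) (F K : Type*) [Field F] [Fintype F] [Field K] [Fintype K]
    [DecidableEq F] [Algebra F K]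
    (hF : Fintype.card F = q) (hK : Fintype.card K = q ^ 2)
    (hqeven : Even q) (hk1 : 1 ≤ k)
    (hkr : (k : ℤ) = q - 2 * r)
    (ω : K) (hω : orderOf ω = q ^ 2 - 1)
    (α : K) (hα : α = ω ^ (q - 1))
    (g₁ : Polynomial K)
    (hg₁ : g₁ = ∏ i ∈ Finset.Icc (-(r : ℤ)) (r : ℤ), (X - C (α ^ i)))
    (c : ℕ → F) (hc : ∀ j, algebraMap F K (c j) = g₁.coeff j)
    (Code : Submodule F (Fin (q + 1) → F))
    (hCode : Code = Submodule.span F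
      { v | ∃ t : Fin k, v = fun i : Fin (q + 1) =>
          if (t : ℕ) ≤ (i : ℕ) then c ((i : ℕ) - (t : ℕ)) else 0 }) :
    IsGRSCode q k F F (Code : Set (Fin (q + 1) → F)) ∧
    Module.finrank F Code = k ∧
    (∀ w ∈ Code, w ≠ 0 → q + 2 - k ≤ hammingNorm w) := by
  subst hF hα hg₁ hCode
  have hkr : k + 2 * r = Fintype.card F := by omega
  have hq : 2 ≤ Fintype.card F := Fintype.one_lt_card
  have hωprim : IsPrimitiveRoot ω (Fintype.card F ^ 2 - 1) := hω ▸ IsPrimitiveRoot.orderOf ω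
  have hωq2 : ω ^ Fintype.card F ^ 2 = ω := hK ▸ FiniteField.pow_card ω
  have hωq : ω ^ Fintype.card F ≠ ω :=
    hωprim.pow_ne_self hq (Nat.le_sub_one_of_lt (lt_self_pow₀ hq one_lt_two))
  have hα := hωprim.pow_pred_of_sq_sub_one hq
  obtain ⟨a, ha, hcayley⟩ := exists_bijective_cayley hωq2 hωq hα
  obtain ⟨θ, hθ0, hθ, hθlast⟩ := exists_grs_weights hkr hk1
    (by rw [FiniteField.neg_one_eq_one_of_even_card hqeven, one_pow]) hωq2 hωq hα
  obtain ⟨g₀, hg₀monic, hg₀map, hg₀c⟩ := exists_monic_map_eq_of_coeff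
    (algebraMap F K).injective (monic_prod_of_monic _ _ fun i _ => monic_X_sub_C _) hc
  have hg₀deg : g₀.natDegree + k = Fintype.card F + 1 := by
    rw [← hg₀monic.natDegree_map (algebraMap F K), hg₀map, natDegree_finsetProd_X_sub_C_eq_card,
      Int.card_Icc]
    omega
  have hV := Submodule.eq_span_range_of_le_of_finrank_eq
    (v := fun t : Fin k => toFn (Fintype.card F + 1) (X ^ (t : ℕ) * g₀))
    (V := (degreeLT F k).map (grsEncode a θ k)) (by
      rintro _ ⟨f, hf, rfl⟩
      refine mem_span_toFn_of_dvd_ofFn hg₀monic hg₀deg ?_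
      rw [← map_dvd_map (algebraMap F K) (algebraMap F K).injective hg₀monic, hg₀map]
      exact prod_X_sub_C_zpow_dvd_ofFn_grsEncode hα hkr hk1 hcayley hθ hθlast hf)
    (finrank_map_grsEncode ha.injective hθ0 (by omega))
  rw [show c = g₀.coeff from funext fun j => (hg₀c j).symm, ← range_toFn_X_pow_mul, ← hV]
  refine ⟨isGRSCode_map_grsEncode ha hθ0 hk1, finrank_map_grsEncode ha.injective hθ0 (by omega), ?_⟩
  rintro _ ⟨f, hf, rfl⟩ hw0
  exact le_hammingNorm_grsEncode f ha.injective hθ0 hf (by rintro rfl; exact hw0 (map_zero _))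

/-- Let `q` be an even prime power, `ω` a primitive element of `𝔽_{q²}`,
`α = ω^{q−1}` a primitive `(q+1)`-st root of unity, and let `k` be even with `1 ≤ k ≤ q`;
write `k = q − 2r`.  Let `g₁(X) = ∏_{i=−r}^{r} (X − α^i)`, a polynomial with coefficients
`c j` in `𝔽_q` dividing `X^{q+1} − 1`.  Then the `k`-dimensional cyclic code `⟨g₁⟩` of length
`q+1` over `𝔽_q` (the span of the `k` cyclic shifts of `(c₀,…,c_{q+1−k},0,…,0)`) is a
generalised Reed–Solomon code, and is a `[q+1,k,q+2−k]_q` MDS code. -/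
theorem grassl_roetteler_cyclic_even_even_is_GRS
    (q k r : ℕ) (F K : Type*) [Field F] [Fintype F] [Field K] [Fintype K]
    [DecidableEq F] [Algebra F K]
    (hF : Fintype.card F = q) (hK : Fintype.card K = q ^ 2)
    (hqeven : Even q) (hkeven : Even k) (hk1 : 1 ≤ k) (hkq : k ≤ q)
    (hkr : (k : ℤ) = q - 2 * r)
    (ω : K) (hω : orderOf ω = q ^ 2 - 1)
    (α : K) (hα : α = ω ^ (q - 1))
    (g₁ : Polynomial K)
    (hg₁ : g₁ = ∏ i ∈ Finset.Icc (-(r : ℤ)) (r : ℤ), (X - C (α ^ i)))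
    (c : ℕ → F) (hc : ∀ j, algebraMap F K (c j) = g₁.coeff j)
    (Code : Submodule F (Fin (q + 1) → F))
    (hCode : Code = Submodule.span F
      { v | ∃ t : Fin k, v = fun i : Fin (q + 1) =>
          if (t : ℕ) ≤ (i : ℕ) then c ((i : ℕ) - (t : ℕ)) else 0 }) :
    IsGRSCode q k F F (Code : Set (Fin (q + 1) → F)) ∧
    Module.finrank F Code = k ∧
    (∀ w ∈ Code, w ≠ 0 → q + 2 - k ≤ hammingNorm w) :=
  grassl_roetteler_cyclic_even_even_is_GRS_general q k r F K hF hK hqeven hk1 hkr ω hω α hα g₁ hg₁ c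
    hc Code hCode
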